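/- For every α > 0 and all s, t > 0, one has (t^α · (t s)^α) / ((1 + t^{2α})(1 + (t s)^{2α})) ≤ s^α / (1 + s^{2α}). Moreover the supremum over t > 0 of the left-hand side equals s^α/(1+s^α)². -/

import Mathlib

/-!
With `x = t ^ α` and `y = (t * s) ^ α` the quantity is `x y / ((1 + x²)(1 + y²))`, and
`(1 + x²)(1 + y²) = (x + y)² + (1 - x y)²`. Hence it is at most `x y / (x + y)² = s ^ α / (1 + s ^ α)²`,
with equality exactly when `x y = 1`, i.e. at `t = 1 / √s`.
-/

open Real

lemma one_add_sq_mul_one_add_sq (x y : ℝ) :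
    (1 + x ^ 2) * (1 + y ^ 2) = (x + y) ^ 2 + (1 - x * y) ^ 2 := by
  ring

lemma mul_div_one_add_sq_mul_one_add_sq_le {x y : ℝ} (hxy : 0 ≤ x * y) (hx_add_y : 0 < x + y) :
    x * y / ((1 + x ^ 2) * (1 + y ^ 2)) ≤ x * y / (x + y) ^ 2 := by
  refine div_le_div_of_nonneg_left hxy (by positivity) ?_
  rw [one_add_sq_mul_one_add_sq]
  exact le_add_of_nonneg_right (sq_nonneg _)

lemma mul_div_one_add_sq_mul_one_add_sq_of_mul_eq_one {x y : ℝ} (hxy : x * y = 1) :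
    x * y / ((1 + x ^ 2) * (1 + y ^ 2)) = x * y / (x + y) ^ 2 := by
  rw [one_add_sq_mul_one_add_sq, hxy, sub_self, zero_pow two_ne_zero, add_zero]

lemma div_one_add_sq_le_div_one_add_sq {σ : ℝ} (hσ : 0 ≤ σ) :
    σ / (1 + σ) ^ 2 ≤ σ / (1 + σ ^ 2) :=
  div_le_div_of_nonneg_left hσ (by positivity) (by nlinarith)

lemma rpow_two_mul_eq_sq {x : ℝ} (hx : 0 ≤ x) (α : ℝ) : x ^ (2 * α) = (x ^ α) ^ 2 := by
  rw [mul_comm, rpow_mul hx, rpow_two]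

section RpowRatio

variable {α s t : ℝ}

lemma rpow_ratio_eq (hs : 0 ≤ s) (ht : 0 < t) :
    (t ^ α * (t * s) ^ α) / ((1 + t ^ (2 * α)) * (1 + (t * s) ^ (2 * α)))
      = t ^ α * (t * s) ^ α / ((1 + (t ^ α) ^ 2) * (1 + ((t * s) ^ α) ^ 2)) := by
  rw [rpow_two_mul_eq_sq ht.le, rpow_two_mul_eq_sq (mul_nonneg ht.le hs)]

lemma rpow_mul_div_rpow_add_sq (hs : 0 ≤ s) (ht : 0 < t) :
    t ^ α * (t * s) ^ α / (t ^ α + (t * s) ^ α) ^ 2 = s ^ α / (1 + s ^ α) ^ 2 := by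
  have htα : 0 < t ^ α := rpow_pos_of_pos ht α
  rw [mul_rpow ht.le hs]
  field_simp

lemma rpow_ratio_le (hs : 0 ≤ s) (ht : 0 < t) :
    (t ^ α * (t * s) ^ α) / ((1 + t ^ (2 * α)) * (1 + (t * s) ^ (2 * α)))
      ≤ s ^ α / (1 + s ^ α) ^ 2 := by
  have htα : 0 < t ^ α := rpow_pos_of_pos ht α
  have htsα : 0 ≤ (t * s) ^ α := rpow_nonneg (mul_nonneg ht.le hs) α
  rw [rpow_ratio_eq hs ht, ← rpow_mul_div_rpow_add_sq hs ht]
  exact mul_div_one_add_sq_mul_one_add_sq_le (by positivity) (by positivity)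

lemma rpow_ratio_inv_sqrt (hs : 0 < s) :
    ((√s)⁻¹ ^ α * ((√s)⁻¹ * s) ^ α)
        / ((1 + (√s)⁻¹ ^ (2 * α)) * (1 + ((√s)⁻¹ * s) ^ (2 * α)))
      = s ^ α / (1 + s ^ α) ^ 2 := by
  have ht : 0 < (√s)⁻¹ := inv_pos.mpr (sqrt_pos.mpr hs)
  have hxy : (√s)⁻¹ ^ α * ((√s)⁻¹ * s) ^ α = 1 := by
    rw [← mul_rpow ht.le (mul_nonneg ht.le hs.le), ← mul_assoc, ← sq, inv_pow,
      sq_sqrt hs.le, inv_mul_cancel₀ hs.ne', one_rpow]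
  rw [rpow_ratio_eq hs.le ht, mul_div_one_add_sq_mul_one_add_sq_of_mul_eq_one hxy,
    rpow_mul_div_rpow_add_sq hs.le ht]

end RpowRatio

theorem stmt_1_general (α s : ℝ) (hs : 0 < s) :
    (∀ t : ℝ, 0 < t →
      (t ^ α * (t * s) ^ α) / ((1 + t ^ (2 * α)) * (1 + (t * s) ^ (2 * α)))
        ≤ s ^ α / (1 + s ^ (2 * α))) ∧
    IsGreatest
      ((fun t : ℝ =>
        (t ^ α * (t * s) ^ α) / ((1 + t ^ (2 * α)) * (1 + (t * s) ^ (2 * α)))) ''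
        Set.Ioi 0)
      (s ^ α / (1 + s ^ α) ^ 2) := by
  have hsα : 0 ≤ s ^ α := rpow_nonneg hs.le α
  refine ⟨fun t ht => ?_, ⟨(√s)⁻¹, inv_pos.mpr (sqrt_pos.mpr hs), rpow_ratio_inv_sqrt hs⟩, ?_⟩
  · calc _ ≤ s ^ α / (1 + s ^ α) ^ 2 := rpow_ratio_le hs.le ht
      _ ≤ s ^ α / (1 + (s ^ α) ^ 2) := div_one_add_sq_le_div_one_add_sq hsα
      _ = s ^ α / (1 + s ^ (2 * α)) := by rw [rpow_two_mul_eq_sq hs.le]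
  · rintro _ ⟨t, ht, rfl⟩
    exact rpow_ratio_le hs.le ht

theorem stmt_1 (α s : ℝ) (hα : 0 < α) (hs : 0 < s) :
    (∀ t : ℝ, 0 < t →
      (t ^ α * (t * s) ^ α) / ((1 + t ^ (2 * α)) * (1 + (t * s) ^ (2 * α)))
        ≤ s ^ α / (1 + s ^ (2 * α))) ∧
    IsGreatest
      ((fun t : ℝ =>
        (t ^ α * (t * s) ^ α) / ((1 + t ^ (2 * α)) * (1 + (t * s) ^ (2 * α)))) ''
        Set.Ioi 0)
      (s ^ α / (1 + s ^ α) ^ 2) :=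
  stmt_1_general α s hs
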